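/- Let A be an n×n real Hurwitz matrix and Θ an n×n real matrix. Then D = ∫₀^∞ e^{tA} Θ e^{tAᵀ} dt converges and satisfies the Lyapunov equation A D + D Aᵀ = −Θ. -/

import Mathlib

/-!
If `A` is Hurwitz, every eigenvalue of `exp A` is `e^ν` for an eigenvalue `ν` of `A` (take a
common eigenvector of the commuting matrices `A` and `exp A`), so `|e^ν| < 1` and the spectral
radius of `exp A` is `< 1`. By Gelfand's formula some power `exp (k • A)` has norm `< 1`, and
submultiplicativity of the norm turns this into `‖exp (t • A)‖ = O(e^{-b t})`. Hence
`F t = exp (t • A) * Θ * exp (t • Aᵀ)` decays exponentially: it is integrable on `(0, ∞)` and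
tends to `0`. As `F' = A F + F Aᵀ`, integrating over `(0, ∞)` gives `A D + D Aᵀ = 0 - F 0 = -Θ`.
-/

open MeasureTheory Matrix NormedSpace

attribute [local instance] Matrix.frobeniusNormedAddCommGroup Matrix.frobeniusNormedSpace

open Filter Asymptotics Topology Set

section IntegralIoi

variable {E : Type*} [NormedAddCommGroup E]

theorem integrableOn_Ioi_of_isBigO_exp_neg {f : ℝ → E} {a b : ℝ} (hb : 0 < b)
    (hf : ContinuousOn f (Ici a)) (ho : f =O[atTop] fun t => Real.exp (-b * t)) :
    IntegrableOn f (Ioi a) :=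
  integrableOn_Ici_iff_integrableOn_Ioi (by finiteness) |>.mp <|
    (hf.locallyIntegrableOn measurableSet_Ici).integrableOn_of_isBigO_atTop
      ho ⟨Ioi b, Ioi_mem_atTop b, exp_neg_integrableOn_Ioi b hb⟩

theorem tendsto_zero_of_isBigO_exp_neg {f : ℝ → E} {b : ℝ} (hb : 0 < b)
    (ho : f =O[atTop] fun t => Real.exp (-b * t)) : Tendsto f atTop (𝓝 0) :=
  ho.trans_tendsto <| Real.tendsto_exp_atBot.comp <|
    tendsto_id.const_mul_atTop_of_neg (neg_neg_iff_pos.2 hb)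

theorem ContinuousLinearMap.map_integral_Ioi_eq_neg_of_hasDerivAt [NormedSpace ℝ E]
    [CompleteSpace E] (L : E →L[ℝ] E) {F : ℝ → E} {a : ℝ}
    (hderiv : ∀ t, HasDerivAt F (L (F t)) t) (hint : IntegrableOn F (Ioi a))
    (hlim : Tendsto F atTop (𝓝 0)) :
    L (∫ t in Ioi a, F t) = -F a := by
  rw [← L.integral_comp_comm hint, integral_Ioi_of_hasDerivAt_of_tendsto
    (hderiv a).continuousAt.continuousWithinAt (fun t _ => hderiv t) (L.integrable_comp hint) hlim,
    zero_sub]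

end IntegralIoi

section BanachAlgebra

variable {𝔸 : Type*} [NormedRing 𝔸] [NormedAlgebra ℝ 𝔸] [CompleteSpace 𝔸]

theorem hasDerivAt_exp_smul_mul_mul_exp_smul (x y c : 𝔸) (t : ℝ) :
    HasDerivAt (fun s : ℝ => exp (s • x) * c * exp (s • y))
      (x * (exp (t • x) * c * exp (t • y)) + exp (t • x) * c * exp (t • y) * y) t := by
  refine (((hasDerivAt_exp_smul_const' x t).mul_const c).mul
    (hasDerivAt_exp_smul_const y t)).congr_deriv ?_
  simp only [mul_assoc]

theorem norm_exp_smul_le_of_norm_exp_smul_le {x : 𝔸} {T b K : ℝ} (hT : 0 < T) (hb : 0 ≤ b)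
    (hK : ∀ s ∈ Icc 0 T, ‖exp (s • x)‖ ≤ K) (hstep : ‖exp (T • x)‖ ≤ Real.exp (-b * T))
    {t : ℝ} (ht : 0 ≤ t) :
    ‖exp (t • x)‖ ≤ K * Real.exp (b * T) * Real.exp (-b * t) := by
  let +nondep : NormedAlgebra ℚ 𝔸 := .restrictScalars ℚ ℝ 𝔸
  have hperiod : ∀ k : ℕ, ∀ s ∈ Icc 0 T,
      ‖exp ((s + k * T) • x)‖ ≤ K * Real.exp (-b * (k * T)) := by
    intro k s hs
    induction k with
    | zero => simpa using hK s hs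
    | succ k ih =>
      have hsplit : exp ((s + (k + 1 : ℕ) * T) • x) = exp (T • x) * exp ((s + k * T) • x) := by
        rw [← NormedSpace.exp_add_of_commute (((Commute.refl x).smul_left _).smul_right _),
          ← add_smul]
        push_cast; ring_nf
      calc ‖exp ((s + (k + 1 : ℕ) * T) • x)‖
          ≤ ‖exp (T • x)‖ * ‖exp ((s + k * T) • x)‖ := hsplit ▸ norm_mul_le _ _
        _ ≤ Real.exp (-b * T) * (K * Real.exp (-b * (k * T))) :=
          mul_le_mul hstep ih (norm_nonneg _) (Real.exp_pos _).le
        _ = K * Real.exp (-b * ((k + 1 : ℕ) * T)) := by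
          rw [mul_left_comm, ← Real.exp_add]; push_cast; ring_nf
  have hK0 : 0 ≤ K := (norm_nonneg _).trans (hK 0 ⟨le_rfl, hT.le⟩)
  set k := ⌊t / T⌋₊
  have hk : k * T ≤ t := (le_div_iff₀ hT).1 (Nat.floor_le (div_nonneg ht hT.le))
  have hk' : t < k * T + T := by
    have := (div_lt_iff₀ hT).1 (Nat.lt_floor_add_one (t / T))
    linarith
  have hkt := hperiod k (t - k * T) ⟨by linarith, by linarith⟩
  rw [sub_add_cancel] at hkt
  calc ‖exp (t • x)‖ ≤ K * Real.exp (-b * (k * T)) := hkt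
    _ ≤ K * Real.exp (b * T + -b * t) := by gcongr; nlinarith
    _ = K * Real.exp (b * T) * Real.exp (-b * t) := by rw [Real.exp_add, mul_assoc]

theorem exp_smul_isBigO_exp_neg_of_norm_exp_smul_lt_one {x : 𝔸} {T : ℝ} (hT : 0 < T)
    (hx : ‖exp (T • x)‖ < 1) :
    ∃ b > 0, (fun t : ℝ => exp (t • x)) =O[atTop] fun t => Real.exp (-b * t) := by
  set b := (1 - ‖exp (T • x)‖) / T
  have hb : 0 < b := div_pos (sub_pos.2 hx) hT
  have hstep : ‖exp (T • x)‖ ≤ Real.exp (-b * T) := by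
    -- `b` is chosen so that `‖exp (T • x)‖ = -b * T + 1 ≤ exp (-b * T)`
    have : b * T = 1 - ‖exp (T • x)‖ := div_mul_cancel₀ _ hT.ne'
    linarith [Real.add_one_le_exp (-b * T)]
  have hcont : Continuous fun s : ℝ => exp (s • x) :=
    continuous_iff_continuousAt.2 fun t => (hasDerivAt_exp_smul_const x t).continuousAt
  obtain ⟨K, hK⟩ := (isCompact_Icc (a := 0) (b := T)).exists_bound_of_continuousOn
    hcont.continuousOn
  refine ⟨b, hb, IsBigO.of_bound (K * Real.exp (b * T)) ?_⟩
  filter_upwards [eventually_ge_atTop 0] with t ht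
  rw [Real.norm_of_nonneg (Real.exp_pos _).le]
  exact norm_exp_smul_le_of_norm_exp_smul_le hT hb.le hK hstep ht

end BanachAlgebra

theorem spectrum.eventually_norm_pow_lt_one {A : Type*} [NormedRing A] [NormedAlgebra ℂ A]
    [CompleteSpace A] {a : A} (ha : spectralRadius ℂ a < 1) :
    ∀ᶠ k : ℕ in atTop, ‖a ^ k‖ < 1 := by
  filter_upwards [(pow_nnnorm_pow_one_div_tendsto_nhds_spectralRadius a).eventually_lt_const ha,
    eventually_gt_atTop 0] with k hk hk0
  rw [one_div, ENNReal.rpow_inv_lt_iff (by positivity), ENNReal.one_rpow] at hk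
  exact_mod_cast hk

theorem Module.End.exists_hasEigenvector_of_commute {K V : Type*} [Field K] [IsAlgClosed K]
    [AddCommGroup V] [Module K V] [FiniteDimensional K V] {f g : End K V} (hfg : Commute f g)
    {μ : K} (hμ : g.HasEigenvalue μ) :
    ∃ ν v, f.HasEigenvector ν v ∧ g.HasEigenvector μ v := by
  have hmaps : ∀ v ∈ g.eigenspace μ, f v ∈ g.eigenspace μ := fun v hv => by
    rw [mem_eigenspace_iff] at hv ⊢
    rw [← Module.End.mul_apply, ← hfg.eq, Module.End.mul_apply, hv, map_smul]
  have : Nontrivial (g.eigenspace μ) := Submodule.nontrivial_iff_ne_bot.2 hμ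
  obtain ⟨ν, hν⟩ := exists_eigenvalue (f.restrict hmaps)
  obtain ⟨w, hw⟩ := hν.exists_hasEigenvector
  have hw0 : (w : V) ≠ 0 := by simpa using hw.2
  exact ⟨ν, w, ⟨eigenspace_restrict_le_eigenspace f hmaps ν ⟨w, hw.1, rfl⟩, hw0⟩, w.2, hw0⟩

section FrobeniusAlgebra

attribute [local instance] Matrix.frobeniusNormedRing Matrix.frobeniusNormedAlgebra

namespace Matrix

variable {m : Type*} [Fintype m] [DecidableEq m]

theorem exp_mulVec_of_mulVec_eq_smul {B : Matrix m m ℂ} {v : m → ℂ} {ν : ℂ}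
    (h : B *ᵥ v = ν • v) : exp B *ᵥ v = Complex.exp ν • v := by
  -- `V`, all of whose columns are `v`, intertwines the scalar `ν` with `B`; this passes to `exp`
  let V : Matrix m m ℂ := of fun i _ => v i
  have hV : SemiconjBy V (algebraMap ℂ _ ν) B := by
    rw [SemiconjBy, ← Algebra.commutes, ← Algebra.smul_def]
    ext i j
    simpa [V, mul_apply, mulVec, dotProduct] using (congrFun h i).symm
  have hexp := hV.exp_right
  rw [← algebraMap_exp_comm, SemiconjBy, ← Algebra.commutes, ← Algebra.smul_def] at hexp
  ext i
  have := congrFun (congrFun hexp i) i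
  simp only [V, mul_apply, smul_apply, of_apply, smul_eq_mul] at this
  rw [mulVec, dotProduct, Pi.smul_apply, smul_eq_mul, Complex.exp_eq_exp_ℂ]
  exact this.symm

theorem exists_mem_spectrum_exp_eq {B : Matrix m m ℂ} {μ : ℂ} (hμ : μ ∈ spectrum ℂ (exp B)) :
    ∃ ν ∈ spectrum ℂ B, Complex.exp ν = μ := by
  rw [← spectrum_toLin', ← Module.End.hasEigenvalue_iff_mem_spectrum] at hμ
  obtain ⟨ν, v, hBv, hexpv⟩ := Module.End.exists_hasEigenvector_of_commute
    ((Commute.refl B).exp_right.map toLinAlgEquiv') hμ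
  refine ⟨ν, ?_, ?_⟩
  · rw [← spectrum_toLin', ← Module.End.hasEigenvalue_iff_mem_spectrum]
    exact Module.End.hasEigenvalue_of_hasEigenvector hBv
  · refine smul_left_injective ℂ hexpv.2 (?_ : Complex.exp ν • v = μ • v)
    rw [← exp_mulVec_of_mulVec_eq_smul hBv.apply_eq_smul]
    exact hexpv.apply_eq_smul

theorem spectralRadius_exp_lt_one {B : Matrix m m ℂ} (hB : ∀ ν ∈ spectrum ℂ B, ν.re < 0) :
    spectralRadius ℂ (exp B) < 1 := by
  rcases (spectrum ℂ (exp B)).eq_empty_or_nonempty with hempty | hne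
  · simp [spectralRadius, hempty]
  refine_lift spectrum.spectralRadius_lt_of_forall_lt_of_nonempty hne fun μ hμ => ?_
  obtain ⟨ν, hν, rfl⟩ := exists_mem_spectrum_exp_eq hμ
  rw [← NNReal.coe_lt_coe, coe_nnnorm, NNReal.coe_one, Complex.norm_exp]
  exact Real.exp_lt_one_iff.2 (hB ν hν)

theorem exp_map_algebraMap (A : Matrix m m ℝ) :
    (exp A).map (algebraMap ℝ ℂ) = exp (A.map (algebraMap ℝ ℂ)) :=
  map_exp ((algebraMap ℝ ℂ).mapMatrix) (continuous_id.matrix_map Complex.continuous_ofReal) A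

theorem exp_smul_isBigO_exp_neg_of_hurwitz {A : Matrix m m ℝ}
    (hA : ∀ μ ∈ spectrum ℂ (A.map (algebraMap ℝ ℂ)), μ.re < 0) :
    ∃ b > 0, (fun t : ℝ => exp (t • A)) =O[atTop] fun t => Real.exp (-b * t) := by
  have hpow : ∀ᶠ k : ℕ in atTop, ‖exp (A.map (algebraMap ℝ ℂ)) ^ k‖ < 1 :=
    spectrum.eventually_norm_pow_lt_one (spectralRadius_exp_lt_one hA)
  obtain ⟨k, hk, hk0⟩ := (hpow.and (eventually_gt_atTop 0)).exists
  refine exp_smul_isBigO_exp_neg_of_norm_exp_smul_lt_one (T := k) (Nat.cast_pos.2 hk0) ?_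
  have hmap : (exp A ^ k).map (algebraMap ℝ ℂ) = exp (A.map (algebraMap ℝ ℂ)) ^ k := by
    rw [← exp_map_algebraMap, ← RingHom.mapMatrix_apply, map_pow, RingHom.mapMatrix_apply]
  rw [Nat.cast_smul_eq_nsmul, NormedSpace.exp_nsmul, ← frobenius_norm_map_eq _ (algebraMap ℝ ℂ)
    Complex.norm_real]
  exact hmap ▸ hk

end Matrix

end FrobeniusAlgebra

theorem stmt_10 {n : ℕ} (A Θ : Matrix (Fin n) (Fin n) ℝ)
    (hHurwitz : ∀ μ ∈ spectrum ℂ (A.map (algebraMap ℝ ℂ)), μ.re < 0) :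
    @IntegrableOn _ _ _ _ SeminormedAddGroup.toContinuousENorm (fun t : ℝ => exp (t • A) * Θ * exp (t • Aᵀ)) (Set.Ioi 0) volume ∧
      A * (∫ t in Set.Ioi (0 : ℝ), exp (t • A) * Θ * exp (t • Aᵀ)) +
        (∫ t in Set.Ioi (0 : ℝ), exp (t • A) * Θ * exp (t • Aᵀ)) * Aᵀ = -Θ := by
  let : NormedRing (Matrix (Fin n) (Fin n) ℝ) := frobeniusNormedRing
  let : NormedAlgebra ℝ (Matrix (Fin n) (Fin n) ℝ) := frobeniusNormedAlgebra
  obtain ⟨b, hb, hexpA⟩ := exp_smul_isBigO_exp_neg_of_hurwitz hHurwitz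
  have hexpAT : (fun t : ℝ => exp (t • Aᵀ)) =O[atTop] fun t => Real.exp (-b * t) :=
    (hexpA.norm_left.congr_left fun t => by
      rw [← transpose_smul, exp_transpose, frobenius_norm_transpose]).of_norm_left
  set F := fun t : ℝ => exp (t • A) * Θ * exp (t • Aᵀ)
  have hF : F =O[atTop] fun t => Real.exp (-(2 * b) * t) :=
    ((hexpA.mul (isBigO_const_const Θ one_ne_zero atTop)).mul hexpAT).congr_right fun t => by
      rw [mul_one, ← Real.exp_add]; ring_nf
  let L : Matrix (Fin n) (Fin n) ℝ →L[ℝ] Matrix (Fin n) (Fin n) ℝ :=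
    (LinearMap.mulLeft ℝ A + LinearMap.mulRight ℝ Aᵀ).toContinuousLinearMap
  have hderiv : ∀ t, HasDerivAt F (L (F t)) t := hasDerivAt_exp_smul_mul_mul_exp_smul A Aᵀ Θ
  have hint := integrableOn_Ioi_of_isBigO_exp_neg (a := 0) (by positivity)
    (continuous_iff_continuousAt.2 fun t => (hderiv t).continuousAt).continuousOn hF
  have hlyap := L.map_integral_Ioi_eq_neg_of_hasDerivAt hderiv hint
    (tendsto_zero_of_isBigO_exp_neg (by positivity) hF)
  have hF0 : F 0 = Θ := by simp [F]
  exact ⟨hint, hF0 ▸ hlyap⟩
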